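/- Let f ∈ H with f(0) ≠ 0. If f is H-inner, then for every n ≥ 0 the optimal polynomial approximant p_n* to k̂_0/f is the constant conj(f(0))/‖k_0‖ (equivalently, constant); conversely if all p_n* are the same constant conj(f(0)) (after normalization), then f is H-inner. -/

import Mathlib

open Metric Filter
open scoped ComplexConjugate

noncomputable section

/-- A reproducing kernel Hilbert space of analytic functions on the unit disk,
with bounded shift operator, dense polynomials, and reproducing kernel at 0. -/
structure DiskRKHS (H : Type*) [NormedAddCommGroup H] [InnerProductSpace ℂ H]
    [CompleteSpace H] where
  ev : H →ₗ[ℂ] (ℂ → ℂ)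
  ev_inj : Function.Injective ev
  analytic : ∀ f : H, AnalyticOn ℂ (ev f) (ball (0:ℂ) 1)
  shift : H →L[ℂ] H
  ev_shift : ∀ f : H, ∀ z ∈ ball (0:ℂ) 1, ev (shift f) z = z * ev f z
  one : H
  ev_one : ∀ z ∈ ball (0:ℂ) 1, ev one z = 1
  polyDense : Dense ((Submodule.span ℂ (Set.range fun n : ℕ => (shift ^ n) one) : Submodule ℂ H) : Set H)
  k0 : H
  k0_ne : k0 ≠ 0
  repro : ∀ h : H, (inner ℂ k0 h : ℂ) = ev h 0

namespace DiskRKHS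

variable {H : Type*} [NormedAddCommGroup H] [InnerProductSpace ℂ H] [CompleteSpace H]

/-- The subspace `f·P_n` of polynomial multiples of `f` of degree ≤ n. -/
def fP (R : DiskRKHS H) (f : H) (n : ℕ) : Submodule ℂ H :=
  Submodule.span ℂ (Set.range fun k : Fin (n+1) => (R.shift ^ (k : ℕ)) f)

/-- The closed shift-invariant subspace `[f]` generated by `f`. -/
def cyc (R : DiskRKHS H) (f : H) : Submodule ℂ H :=
  (Submodule.span ℂ (Set.range fun n : ℕ => (R.shift ^ n) f)).topologicalClosure

/-- The element `p(z) f(z)`, i.e. `p(S) f`. -/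
def pApply (R : DiskRKHS H) (p : Polynomial ℂ) (f : H) : H :=
  p.sum fun k a => a • ((R.shift ^ k) f)

/-- The normalized reproducing kernel `k̂₀ = k₀ / ‖k₀‖` at 0. -/
def normK0 (R : DiskRKHS H) : H := ‖R.k0‖⁻¹ • R.k0

/-- Membership in `K_{Sf} = H ⊖ [Sf]`, i.e. orthogonality to `z^k f` for all `k ≥ 1`. -/
def InKSf (R : DiskRKHS H) (f h : H) : Prop :=
  ∀ k : ℕ, 1 ≤ k → (inner ℂ ((R.shift ^ k) f) h : ℂ) = 0

end DiskRKHS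

/-- `φ` is the orthogonal projection of `g` onto the subspace `K`. -/
def IsProjOn {H : Type*} [NormedAddCommGroup H] [InnerProductSpace ℂ H] [CompleteSpace H]
    (K : Submodule ℂ H) (g φ : H) : Prop :=
  φ ∈ K ∧ ∀ w ∈ K, (inner ℂ w (g - φ) : ℂ) = 0

/-! With `c = conj f(0) / ‖k₀‖`, the reproducing property `⟪k₀, h⟫ = h(0)` and `(z^k f)(0) = 0` for
`k ≥ 1` give `⟪z^k f, k̂₀ - c f⟫ = c (δ_{k0} - ⟪z^k f, f⟫)`. Since `c ≠ 0`, `c f` is the orthogonal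
projection of `k̂₀` onto `f·P_n` exactly when `⟪z^k f, f⟫ = δ_{k0}` for all `k ≤ n`. As `f·P_n` is
finite dimensional, the projection exists and is unique, so both sides of the equivalence say that
this holds for every `k`. -/

theorem Submodule.mem_orthogonal_span_iff {𝕜 E : Type*} [RCLike 𝕜] [NormedAddCommGroup E]
    [InnerProductSpace 𝕜 E] {s : Set E} {v : E} :
    v ∈ (Submodule.span 𝕜 s)ᗮ ↔ ∀ u ∈ s, inner 𝕜 u v = 0 := by
  rw [← Submodule.span_singleton_le_iff_mem, ← Submodule.isOrtho_iff_le, Submodule.isOrtho_comm,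
    Submodule.isOrtho_span]
  simp

section IsProjOn

variable {H : Type*} [NormedAddCommGroup H] [InnerProductSpace ℂ H] [CompleteSpace H]
  {K : Submodule ℂ H} {g φ : H}

theorem isProjOn_iff_mem_orthogonal : IsProjOn K g φ ↔ φ ∈ K ∧ g - φ ∈ Kᗮ := Iff.rfl

theorem isProjOn_iff_eq_starProjection [K.HasOrthogonalProjection] :
    IsProjOn K g φ ↔ φ = K.starProjection g :=
  ⟨fun h => (Submodule.eq_starProjection_of_mem_orthogonal h.1 h.2).symm,
    fun h => h ▸ ⟨K.starProjection_apply_mem g, K.sub_starProjection_mem_orthogonal g⟩⟩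

end IsProjOn

namespace DiskRKHS

variable {H : Type*} [NormedAddCommGroup H] [InnerProductSpace ℂ H] [CompleteSpace H]
  (R : DiskRKHS H) (f : H)

theorem ev_shift_pow (k : ℕ) {z : ℂ} (hz : z ∈ ball (0 : ℂ) 1) :
    R.ev ((R.shift ^ k) f) z = z ^ k * R.ev f z := by
  induction k with
  | zero => simp
  | succ k ih =>
    rw [pow_succ', mul_apply_eq_comp, R.ev_shift _ z hz, ih]
    ring

theorem inner_shift_pow_normK0 (k : ℕ) :
    inner ℂ ((R.shift ^ k) f) R.normK0 =
      conj (R.ev f 0) / (‖R.k0‖ : ℂ) * if k = 0 then 1 else 0 := by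
  rw [normK0, inner_smul_right_eq_smul, ← inner_conj_symm, R.repro,
    R.ev_shift_pow f k (mem_ball_self one_pos)]
  rcases eq_or_ne k 0 with rfl | hk <;> simp [*, div_eq_inv_mul]

instance (n : ℕ) : FiniteDimensional ℂ (R.fP f n) :=
  FiniteDimensional.span_of_finite ℂ (Set.finite_range _)

theorem mem_orthogonal_fP_iff {n : ℕ} {v : H} :
    v ∈ (R.fP f n)ᗮ ↔ ∀ k ≤ n, inner ℂ ((R.shift ^ k) f) v = 0 := by
  simp [fP, Submodule.mem_orthogonal_span_iff, Fin.forall_iff]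

theorem isProjOn_fP_normK0_smul_iff (hf : R.ev f 0 ≠ 0) (n : ℕ) :
    IsProjOn (R.fP f n) R.normK0 ((conj (R.ev f 0) / (‖R.k0‖ : ℂ)) • f) ↔
      ∀ k ≤ n, inner ℂ ((R.shift ^ k) f) f = if k = 0 then 1 else 0 := by
  have hc : conj (R.ev f 0) / (‖R.k0‖ : ℂ) ≠ 0 := by simp [hf, R.k0_ne]
  have hf_mem : f ∈ R.fP f n := Submodule.subset_span ⟨0, by simp⟩
  simp only [isProjOn_iff_mem_orthogonal, Submodule.smul_mem _ _ hf_mem, true_and,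
    mem_orthogonal_fP_iff, inner_sub_right, inner_smul_right, inner_shift_pow_normK0, ← mul_sub,
    mul_eq_zero, hc, false_or, sub_eq_zero]
  exact forall₂_congr fun _ _ => eq_comm

end DiskRKHS

theorem stmt5 {H : Type*} [NormedAddCommGroup H] [InnerProductSpace ℂ H] [CompleteSpace H]
    (R : DiskRKHS H) (f : H) (hf : R.ev f 0 ≠ 0) :
    (∀ j : ℕ, (inner ℂ ((R.shift ^ j) f) f : ℂ) = if j = 0 then 1 else 0) ↔
      (∀ n : ℕ, ∀ w : H, IsProjOn (R.fP f n) R.normK0 w →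
        w = ((starRingEnd ℂ) (R.ev f 0) / (‖R.k0‖ : ℂ)) • f) := by
  have forall_isProjOn_eq_iff (n : ℕ) :
      (∀ w : H, IsProjOn (R.fP f n) R.normK0 w →
        w = ((starRingEnd ℂ) (R.ev f 0) / (‖R.k0‖ : ℂ)) • f) ↔
      IsProjOn (R.fP f n) R.normK0 (((starRingEnd ℂ) (R.ev f 0) / (‖R.k0‖ : ℂ)) • f) := by
    simp only [isProjOn_iff_eq_starProjection, forall_eq]
    exact eq_comm
  simp only [forall_isProjOn_eq_iff, R.isProjOn_fP_normK0_smul_iff f hf]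
  exact ⟨fun h n k _ => h k, fun h j => h j j le_rfl⟩
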